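/- arXiv:2005.03630 — 5 statements merged into one kernel-verified Lean document; each statement's English description precedes it below -/
import Mathlib

section
/- Let μ be a finite measure on a measurable space (S, Σ) and let V ⊆ S be a set that is not measurable with respect to the completion of μ (equivalently, the inner measure of V is strictly smaller than its outer measure). Then there exist two measures μ₀ and μ₁ on Σ_V := σ(Σ ∪ {V}), both of which extend μ (i.e. μ₀ and μ₁ agree with μ on Σ), such that μ₀(V) ≠ μ₁(V). -/
/-!
Let `V̂ = toMeasurable μ V` be a measurable hull of `V`. The outer measure
`t ↦ μ*(t ∩ V) + μ(t \ V̂)` has `Σ` and `V` among its Carathéodory sets, and it agrees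
with `μ` on `Σ` because `μ(A ∩ V̂) = μ*(A ∩ V)` for measurable `A`. Its Carathéodory
restriction is therefore an extension of `μ` to `Σ_V` giving `V` its outer measure `μ*(V)`.
The same construction for `Vᶜ` gives an extension assigning `V` the inner measure
`μ(S) - μ*(Vᶜ)`. The two values agree only if `μ*(V) + μ*(Vᶜ) = μ(S)`, which for a finite
measure forces `V` to be null-measurable.
-/

open MeasureTheory MeasurableSpace Set

namespace MeasureTheory.OuterMeasure

variable {α : Type*}

theorem caratheodory_le_restrict_caratheodory (ν : OuterMeasure α) (s : Set α) :
    ν.caratheodory ≤ (restrict s ν).caratheodory := by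
  intro u hu
  rw [isCaratheodory_iff] at hu ⊢
  intro t
  simp only [restrict_apply]
  rw [hu (t ∩ s), inter_right_comm, inter_sdiff_right_comm]

theorem isCaratheodory_restrict_of_subset (ν : OuterMeasure α) {s u : Set α} (h : s ⊆ u) :
    (restrict s ν).IsCaratheodory u := by
  intro t
  simp only [restrict_apply, inter_assoc, inter_eq_right.2 h, sdiff_eq,
    (disjoint_compl_left.mono_right h).inter_eq, inter_empty, measure_empty, add_zero]

theorem IsCaratheodory.add {ν₁ ν₂ : OuterMeasure α} {u : Set α}
    (h₁ : ν₁.IsCaratheodory u) (h₂ : ν₂.IsCaratheodory u) :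
    (ν₁ + ν₂).IsCaratheodory u :=
  le_add_caratheodory ν₁ ν₂ u ⟨h₁, h₂⟩

end MeasureTheory.OuterMeasure

namespace MeasurableSpace

variable {α : Type*} (m : MeasurableSpace α) (V : Set α)

theorem measurableSet_sup_generateFrom_singleton : MeasurableSet[m ⊔ generateFrom {V}] V :=
  le_sup_right (α := MeasurableSpace α) _ (measurableSet_generateFrom rfl)

theorem measurableSet_sup_generateFrom_of_measurableSet {A : Set α} (hA : MeasurableSet[m] A) :
    MeasurableSet[m ⊔ generateFrom {V}] A :=
  le_sup_left (α := MeasurableSpace α) A hA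

end MeasurableSpace

namespace MeasureTheory.Measure

open OuterMeasure

variable {α : Type*} [m : MeasurableSpace α] (μ : Measure α) (V : Set α)

noncomputable def extensionOuterMeasure : OuterMeasure α :=
  μ.toOuterMeasure.restrict V + μ.toOuterMeasure.restrict (toMeasurable μ V)ᶜ

theorem extensionOuterMeasure_apply (t : Set α) :
    μ.extensionOuterMeasure V t = μ (t ∩ V) + μ (t \ toMeasurable μ V) := by
  simp [extensionOuterMeasure, sdiff_eq]

theorem le_extensionOuterMeasure_caratheodory :
    m ≤ (μ.extensionOuterMeasure V).caratheodory := fun _ hA ↦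
  have hA' := le_toOuterMeasure_caratheodory μ _ hA
  .add (caratheodory_le_restrict_caratheodory _ _ _ hA')
    (caratheodory_le_restrict_caratheodory _ _ _ hA')

theorem isCaratheodory_extensionOuterMeasure : (μ.extensionOuterMeasure V).IsCaratheodory V :=
  .add (isCaratheodory_restrict_of_subset _ subset_rfl)
    ((isCaratheodory_compl_iff _).1
      (isCaratheodory_restrict_of_subset _ (compl_subset_compl.2 (subset_toMeasurable μ V))))

theorem sup_generateFrom_le_extensionOuterMeasure_caratheodory :
    m ⊔ generateFrom {V} ≤ (μ.extensionOuterMeasure V).caratheodory :=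
  sup_le (μ.le_extensionOuterMeasure_caratheodory V)
    (generateFrom_singleton_le (μ.isCaratheodory_extensionOuterMeasure V))

theorem sup_generateFrom_le_extensionOuterMeasure_compl_caratheodory :
    m ⊔ generateFrom {V} ≤ (μ.extensionOuterMeasure Vᶜ).caratheodory :=
  sup_le (μ.le_extensionOuterMeasure_caratheodory Vᶜ)
    (generateFrom_singleton_le ((isCaratheodory_compl_iff _).1
      (μ.isCaratheodory_extensionOuterMeasure Vᶜ)))

theorem extensionOuterMeasure_apply_of_measurableSet [SFinite μ] {A : Set α}
    (hA : MeasurableSet A) : μ.extensionOuterMeasure V A = μ A := by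
  rw [extensionOuterMeasure_apply, inter_comm, ← measure_toMeasurable_inter_of_sFinite hA,
    inter_comm, measure_inter_add_sdiff _ (measurableSet_toMeasurable μ V)]

theorem extensionOuterMeasure_apply_self : μ.extensionOuterMeasure V V = μ V := by
  rw [extensionOuterMeasure_apply, inter_self, sdiff_eq_empty.2 (subset_toMeasurable μ V),
    measure_empty, add_zero]

noncomputable def extendOuter : @Measure α (m ⊔ generateFrom {V}) :=
  @OuterMeasure.toMeasure α (m ⊔ generateFrom {V}) (μ.extensionOuterMeasure V)
    (μ.sup_generateFrom_le_extensionOuterMeasure_caratheodory V)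

noncomputable def extendInner : @Measure α (m ⊔ generateFrom {V}) :=
  @OuterMeasure.toMeasure α (m ⊔ generateFrom {V}) (μ.extensionOuterMeasure Vᶜ)
    (μ.sup_generateFrom_le_extensionOuterMeasure_compl_caratheodory V)

theorem extendOuter_apply {A : Set α} (hA : MeasurableSet[m ⊔ generateFrom {V}] A) :
    extendOuter μ V A = μ.extensionOuterMeasure V A :=
  @toMeasure_apply α (m ⊔ generateFrom {V}) _ _ _ hA

theorem extendInner_apply {A : Set α} (hA : MeasurableSet[m ⊔ generateFrom {V}] A) :
    extendInner μ V A = μ.extensionOuterMeasure Vᶜ A :=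
  @toMeasure_apply α (m ⊔ generateFrom {V}) _ _ _ hA

theorem extendOuter_apply_of_measurableSet [SFinite μ] {A : Set α} (hA : MeasurableSet A) :
    extendOuter μ V A = μ A := by
  rw [extendOuter_apply μ V (measurableSet_sup_generateFrom_of_measurableSet m V hA),
    extensionOuterMeasure_apply_of_measurableSet μ V hA]

theorem extendInner_apply_of_measurableSet [SFinite μ] {A : Set α} (hA : MeasurableSet A) :
    extendInner μ V A = μ A := by
  rw [extendInner_apply μ V (measurableSet_sup_generateFrom_of_measurableSet m V hA),
    extensionOuterMeasure_apply_of_measurableSet μ Vᶜ hA]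

theorem extendOuter_apply_self : extendOuter μ V V = μ V := by
  rw [extendOuter_apply μ V (measurableSet_sup_generateFrom_singleton m V),
    extensionOuterMeasure_apply_self]

theorem extendInner_apply_self_add_measure_compl [SFinite μ] :
    extendInner μ V V + μ Vᶜ = μ univ := by
  have hV := measurableSet_sup_generateFrom_singleton m V
  rw [← extendInner_apply_of_measurableSet μ V MeasurableSet.univ,
    ← @measure_add_measure_compl α (m ⊔ generateFrom {V}) _ _ hV,
    extendInner_apply μ V hV.compl, extensionOuterMeasure_apply_self]

end MeasureTheory.Measure

theorem MeasureTheory.nullMeasurableSet_of_measure_add_measure_compl_eq {α : Type*}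
    [MeasurableSpace α] {μ : Measure α} [IsFiniteMeasure μ] {s : Set α}
    (h : μ s + μ sᶜ = μ univ) : NullMeasurableSet s μ := by
  set T := toMeasurable μ s
  set W := toMeasurable μ sᶜ
  have hTW : μ (T ∩ W) = 0 := by
    have hunion : T ∪ W = univ := eq_univ_of_forall fun x ↦
      (em (x ∈ s)).imp (subset_toMeasurable μ s ·) (subset_toMeasurable μ sᶜ ·)
    have hsum := measure_union_add_inter T (measurableSet_toMeasurable μ sᶜ) (μ := μ)
    rw [hunion, measure_toMeasurable, measure_toMeasurable, ← h] at hsum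
    simpa using hsum
  have hsT : T \ s ⊆ T ∩ W := fun _ hx ↦ ⟨hx.1, subset_toMeasurable μ sᶜ hx.2⟩
  have hTs : T =ᵐ[μ] s := ae_eq_set.2
    ⟨measure_mono_null hsT hTW,
      by rw [sdiff_eq_empty.2 (subset_toMeasurable μ s), measure_empty]⟩
  exact (measurableSet_toMeasurable μ s).nullMeasurableSet.congr hTs

/-- **Measure extension along a nonmeasurable set.**
If `μ` is a finite measure on `(S, Σ)` and `V ⊆ S` is not measurable with respect to the
completion of `μ` (i.e. `V` is not null-measurable), then there are two measures `μ₀`, `μ₁`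
on `Σ_V := σ(Σ ∪ {V})`, both extending `μ` (they agree with `μ` on `Σ`), such that
`μ₀ V ≠ μ₁ V`. -/
theorem measure_extension_of_not_nullMeasurableSet
    {S : Type*} [m : MeasurableSpace S] (μ : Measure S) [IsFiniteMeasure μ]
    (V : Set S) (hV : ¬ NullMeasurableSet V μ) :
    ∃ μ₀ μ₁ : @Measure S (m ⊔ MeasurableSpace.generateFrom {V}),
      (∀ A : Set S, MeasurableSet[m] A → μ₀ A = μ A) ∧
      (∀ A : Set S, MeasurableSet[m] A → μ₁ A = μ A) ∧
      μ₀ V ≠ μ₁ V := by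
  refine ⟨Measure.extendInner μ V, Measure.extendOuter μ V,
    fun A hA ↦ Measure.extendInner_apply_of_measurableSet μ V hA,
    fun A hA ↦ Measure.extendOuter_apply_of_measurableSet μ V hA, fun h ↦ hV ?_⟩
  apply nullMeasurableSet_of_measure_add_measure_compl_eq
  rw [← Measure.extendInner_apply_self_add_measure_compl μ V, h, Measure.extendOuter_apply_self]
end

section
/- Let (S, Σ, {τ_a : a ∈ L}) be an LMP and R a symmetric binary relation on S. Then R is a state bisimulation if and only if (S, Σ(R), {τ_a : a ∈ L}) is again an LMP, i.e. if and only if for every a ∈ L and every R-closed E ∈ Σ the function s ↦ τ_a(s, E) is Σ(R)-measurable. -/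
open MeasureTheory

/-- A labelled Markov process over the measurable space `S` with label set `L`:
each `τ a` is a Markov kernel, i.e. `τ a s` is a subprobability measure for each state `s`,
and `s ↦ τ a s E` is measurable for each measurable `E`. -/
structure LMP (S : Type*) (L : Type*) [MeasurableSpace S] where
  τ : L → S → Measure S
  prob_le_one : ∀ (a : L) (s : S), τ a s Set.univ ≤ 1
  measurable_eval : ∀ (a : L) (E : Set S), MeasurableSet E → Measurable fun s => τ a s E

namespace LMP

variable {S L : Type*} [MeasurableSpace S]

/-- `A` is `R`-closed: anything related to a point of `A` lies in `A`. -/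
def RClosed (R : Set (S × S)) (A : Set S) : Prop :=
  ∀ ⦃x⦄, x ∈ A → ∀ ⦃s⦄, (x, s) ∈ R → s ∈ A

/-- `Σ(R)`: the family of measurable `R`-closed sets. -/
def sigmaCl (R : Set (S × S)) : Set (Set S) :=
  {A | MeasurableSet A ∧ RClosed R A}

/-- `R(Λ)`: the relation identifying states belonging to exactly the same members of `Λ`. -/
def rel (Λ : Set (Set S)) : Set (S × S) :=
  {p | ∀ A ∈ Λ, p.1 ∈ A ↔ p.2 ∈ A}

/-- `R^T(Λ)`: states assigning the same probabilities to every member of `Λ`, for all labels. -/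
def relT (M : LMP S L) (Λ : Set (Set S)) : Set (S × S) :=
  {p | ∀ (a : L), ∀ E ∈ Λ, M.τ a p.1 E = M.τ a p.2 E}

/-- The operator `𝒪`. -/
def Oop (M : LMP S L) (R : Set (S × S)) : Set (S × S) :=
  M.relT (sigmaCl R)

/-- The operator `𝒢`. -/
def Gop (M : LMP S L) (Λ : Set (Set S)) : Set (Set S) :=
  sigmaCl (M.relT Λ)

/-- The members of the σ-algebra generated by a family of sets. -/
def sigmaGen (U : Set (Set S)) : Set (Set S) :=
  {A | MeasurableSet[MeasurableSpace.generateFrom U] A}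

/-- Transfinite iterates of `𝒪`. -/
noncomputable def Oiter (M : LMP S L) (R : Set (S × S)) (α : Ordinal) : Set (S × S) :=
  Ordinal.limitRecOn α R (fun _ prev => M.Oop prev)
    (fun o _ ih => ⋂ (o' : Ordinal) (h : o' < o), ih o' h)

/-- Transfinite iterates of `𝒢`. -/
noncomputable def Giter (M : LMP S L) (Λ : Set (Set S)) (α : Ordinal) : Set (Set S) :=
  Ordinal.limitRecOn α Λ (fun _ prev => M.Gop prev)
    (fun o _ ih => sigmaGen (⋃ (o' : Ordinal) (h : o' < o), ih o' h))

/-- `Λ` is a sub-σ-algebra of the ambient σ-algebra. -/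
structure IsSubSigmaAlgebra (Λ : Set (Set S)) : Prop where
  subset_meas : ∀ A ∈ Λ, MeasurableSet A
  empty_mem : (∅ : Set S) ∈ Λ
  compl_mem : ∀ A ∈ Λ, Aᶜ ∈ Λ
  iUnion_mem : ∀ f : ℕ → Set S, (∀ n, f n ∈ Λ) → (⋃ n, f n) ∈ Λ

/-- A family `Λ` is stable w.r.t. the process. -/
def Stable (M : LMP S L) (Λ : Set (Set S)) : Prop :=
  ∀ A ∈ Λ, ∀ q : ℚ, 0 ≤ q → q ≤ 1 → ∀ a : L,
    {s : S | ENNReal.ofReal (q : ℝ) < M.τ a s A} ∈ Λ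

/-- A state bisimulation: a symmetric relation such that related states agree on
all measurable `R`-closed sets. -/
def IsStateBisim (M : LMP S L) (R : Set (S × S)) : Prop :=
  (∀ p ∈ R, (p.2, p.1) ∈ R) ∧
    ∀ p ∈ R, ∀ (a : L), ∀ C ∈ sigmaCl R, M.τ a p.1 C = M.τ a p.2 C

/-- State bisimilarity. -/
def stateBisim (M : LMP S L) : Set (S × S) :=
  {p | ∃ R, M.IsStateBisim R ∧ p ∈ R}

/-- Event bisimilarity: related by `R(Λ)` for some stable sub-σ-algebra `Λ`. -/
def eventBisim (M : LMP S L) : Set (S × S) :=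
  {p | ∃ Λ : Set (Set S), IsSubSigmaAlgebra Λ ∧ M.Stable Λ ∧ p ∈ rel Λ}

/-- Formulas of the modal logic `𝓛`. -/
inductive LForm (L : Type*) : Type _
  | top : LForm L
  | and : LForm L → LForm L → LForm L
  | dia : L → {q : ℚ // 0 ≤ q ∧ q < 1} → LForm L → LForm L

/-- Semantics of the logic `𝓛`. -/
def sem (M : LMP S L) : LForm L → Set S
  | LForm.top => Set.univ
  | LForm.and φ ψ => M.sem φ ∩ M.sem ψ
  | LForm.dia a q φ => {s | ENNReal.ofReal ((q : ℚ) : ℝ) < M.τ a s (M.sem φ)}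

/-- `σ(⟦𝓛⟧)`: the σ-algebra generated by the sets definable in the logic. -/
def sigmaLogic (M : LMP S L) : Set (Set S) :=
  sigmaGen (Set.range M.sem)

end LMP

namespace LMP

variable {S : Type*} {R : Set (S × S)}

theorem RClosed.compl (hsym : ∀ p ∈ R, (p.2, p.1) ∈ R) {A : Set S} (hA : RClosed R A) :
    RClosed R Aᶜ :=
  fun _ hx _ hxs hs => hx (hA hs (hsym _ hxs))

theorem RClosed.iUnion {ι : Sort*} {A : ι → Set S} (hA : ∀ i, RClosed R (A i)) :
    RClosed R (⋃ i, A i) := by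
  intro x hx s hxs
  obtain ⟨i, hi⟩ := Set.mem_iUnion.mp hx
  exact Set.mem_iUnion.mpr ⟨i, hA i hi hxs⟩

theorem RClosed.preimage {β : Type*} {f : S → β} (hf : ∀ p ∈ R, f p.1 = f p.2) (B : Set β) :
    RClosed R (f ⁻¹' B) :=
  fun x hx s hxs => by rw [Set.mem_preimage, ← hf (x, s) hxs]; exact hx

theorem rClosed_of_measurableSet_generateFrom_sigmaCl [MeasurableSpace S]
    (hsym : ∀ p ∈ R, (p.2, p.1) ∈ R) {A : Set S}
    (hA : MeasurableSet[MeasurableSpace.generateFrom (sigmaCl R)] A) :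
    RClosed R A := by
  induction A, hA using MeasurableSpace.generateFrom_induction with
  | hC A hAR _ => exact hAR.2
  | empty => exact fun _ hx => hx.elim
  | compl A _ hA => exact hA.compl hsym
  | iUnion A _ hA => exact RClosed.iUnion hA

theorem measurable_generateFrom_sigmaCl_iff [MeasurableSpace S] {β : Type*} [MeasurableSpace β]
    [MeasurableSingletonClass β] (hsym : ∀ p ∈ R, (p.2, p.1) ∈ R) {f : S → β}
    (hf : Measurable f) :
    Measurable[MeasurableSpace.generateFrom (sigmaCl R)] f ↔ ∀ p ∈ R, f p.1 = f p.2 := by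
  refine ⟨fun hfR p hp => ?_, fun hfR B hB =>
    MeasurableSpace.measurableSet_generateFrom ⟨hf hB, RClosed.preimage hfR B⟩⟩
  have hfiber : RClosed R (f ⁻¹' {f p.1}) :=
    rClosed_of_measurableSet_generateFrom_sigmaCl hsym (hfR (measurableSet_singleton _))
  exact (hfiber rfl hp).symm

end LMP

open LMP in
theorem isStateBisim_iff_measurable_on_sigmaCl_general
    {S L : Type*} [MeasurableSpace S]
    (M : LMP S L) (R : Set (S × S)) (hsym : ∀ p ∈ R, (p.2, p.1) ∈ R) :
    M.IsStateBisim R ↔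
      ∀ (a : L), ∀ E ∈ sigmaCl R,
        Measurable[MeasurableSpace.generateFrom (sigmaCl R)] fun s => M.τ a s E := by
  calc M.IsStateBisim R ↔ ∀ (a : L), ∀ E ∈ sigmaCl R, ∀ p ∈ R, M.τ a p.1 E = M.τ a p.2 E :=
        ⟨fun h a E hE p hp => h.2 p hp a E hE,
          fun h => ⟨hsym, fun p hp a E hE => h a E hE p hp⟩⟩
    _ ↔ _ := forall_congr' fun a => forall₂_congr fun E hE =>
        (measurable_generateFrom_sigmaCl_iff hsym (M.measurable_eval a E hE.1)).symm

open LMP in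
/-- A symmetric relation `R` on an LMP is a state bisimulation iff `(S, Σ(R), τ)` is again
an LMP, i.e. iff for every label `a` and every `R`-closed measurable `E`, the map
`s ↦ τ_a(s, E)` is measurable with respect to the σ-algebra `Σ(R)` of measurable
`R`-closed sets. -/
theorem isStateBisim_iff_measurable_on_sigmaCl
    {S L : Type*} [MeasurableSpace S] [Countable L]
    (M : LMP S L) (R : Set (S × S)) (hsym : ∀ p ∈ R, (p.2, p.1) ∈ R) :
    M.IsStateBisim R ↔
      ∀ (a : L), ∀ E ∈ sigmaCl R,
        Measurable[MeasurableSpace.generateFrom (sigmaCl R)] fun s => M.τ a s E :=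
  isStateBisim_iff_measurable_on_sigmaCl_general M R hsym
end

section
/- For any LMP (S, Σ, {τ_a : a ∈ L}), the relations R^T(σ(⟦𝓛⟧)) and R(σ(⟦𝓛⟧)) coincide: two states assign equal τ_a-probability to every set in σ(⟦𝓛⟧) for every label a if and only if they belong to exactly the same sets of σ(⟦𝓛⟧). -/
open MeasureTheory

/-!
Membership in the sets of `σ(⟦𝓛⟧)` is decided by membership in the sets `⟦φ⟧`, and the
measures `τ_a(s, ·)` are finite, so by Dynkin's π-λ theorem they are determined on `σ(⟦𝓛⟧)` by
their values on the π-system of sets `⟦φ⟧`. It therefore suffices to compare `R` and `R^T` on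
the sets `⟦φ⟧`. A difference `τ_a(t, ⟦φ⟧) < τ_a(s, ⟦φ⟧) ≤ 1` is witnessed by a rational `q` in
between, i.e. by the formula `⟨a⟩_{>q} φ`; conversely, equal probabilities on the sets `⟦φ⟧`
give equal membership in them by induction on `φ`.
-/

open MeasureTheory Set

namespace ENNReal

lemma le_of_forall_ofReal_rat_lt_imp {x y : ℝ≥0∞} (hx : x ≤ 1)
    (h : ∀ q : ℚ, 0 ≤ q → q < 1 → ENNReal.ofReal q < x → ENNReal.ofReal q < y) : x ≤ y := by
  by_contra! hyx
  obtain ⟨q, hq0, hyq, hqx⟩ := ENNReal.lt_iff_exists_rat_btwn.mp hyx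
  have hq1 : (q : ℝ) < 1 := ENNReal.ofReal_lt_one.mp (hqx.trans_le hx)
  exact (h q hq0 (by exact_mod_cast hq1) hqx).not_gt hyq

lemma eq_of_forall_ofReal_rat_lt_iff {x y : ℝ≥0∞} (hx : x ≤ 1) (hy : y ≤ 1)
    (h : ∀ q : ℚ, 0 ≤ q → q < 1 → (ENNReal.ofReal q < x ↔ ENNReal.ofReal q < y)) : x = y :=
  le_antisymm (le_of_forall_ofReal_rat_lt_imp hx fun q hq0 hq1 => (h q hq0 hq1).mp)
    (le_of_forall_ofReal_rat_lt_imp hy fun q hq0 hq1 => (h q hq0 hq1).mpr)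

end ENNReal

namespace LMP

variable {S L : Type*}

lemma rel_sigmaGen (U : Set (Set S)) : rel (sigmaGen U) = rel U := by
  refine Subset.antisymm (fun p hp A hA => hp A (MeasurableSpace.measurableSet_generateFrom hA))
    fun p hp A hA => ?_
  induction hA with
  | basic A hA => exact hp A hA
  | empty => simp
  | compl A _ ih => exact ih.not
  | iUnion f _ ih => simpa only [mem_iUnion] using exists_congr ih

variable [MeasurableSpace S]

instance (M : LMP S L) (a : L) (s : S) : IsFiniteMeasure (M.τ a s) :=
  ⟨(M.prob_le_one a s).trans_lt ENNReal.one_lt_top⟩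

lemma τ_le_one (M : LMP S L) (a : L) (s : S) (E : Set S) : M.τ a s E ≤ 1 :=
  (measure_mono (subset_univ E)).trans (M.prob_le_one a s)

lemma relT_sigmaGen_of_isPiSystem (M : LMP S L) {U : Set (Set S)}
    (hU : ∀ A ∈ U, MeasurableSet A) (hpi : IsPiSystem U) (huniv : univ ∈ U) :
    M.relT (sigmaGen U) = M.relT U := by
  refine Subset.antisymm
    (fun p hp a A hA => hp a A (MeasurableSpace.measurableSet_generateFrom hA))
    fun p hp a A hA => ?_
  exact ext_on_measurableSpace_of_generate_finite _ U (hp a) (MeasurableSpace.generateFrom_le hU)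
    rfl hpi (hp a univ huniv) hA

lemma measurableSet_sem (M : LMP S L) (φ : LForm L) : MeasurableSet (M.sem φ) := by
  induction φ with
  | top => exact MeasurableSet.univ
  | and φ ψ hφ hψ => exact hφ.inter hψ
  | dia a q φ hφ => exact M.measurable_eval a _ hφ measurableSet_Ioi

lemma isPiSystem_range_sem (M : LMP S L) : IsPiSystem (range M.sem) := by
  rintro _ ⟨φ, rfl⟩ _ ⟨ψ, rfl⟩ -
  exact ⟨LForm.and φ ψ, rfl⟩

lemma relT_range_sem_subset_rel (M : LMP S L) : M.relT (range M.sem) ⊆ rel (range M.sem) := by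
  rintro ⟨s, t⟩ h _ ⟨φ, rfl⟩
  induction φ with
  | top => simp [sem]
  | and φ ψ hφ hψ => exact and_congr hφ hψ
  | dia a q φ _ => simp only [sem, mem_ofPred_eq, h a (M.sem φ) ⟨φ, rfl⟩]

lemma rel_range_sem_subset_relT (M : LMP S L) : rel (range M.sem) ⊆ M.relT (range M.sem) := by
  rintro ⟨s, t⟩ h a _ ⟨φ, rfl⟩
  exact ENNReal.eq_of_forall_ofReal_rat_lt_iff (M.τ_le_one a s _) (M.τ_le_one a t _)
    fun q hq0 hq1 => h _ ⟨LForm.dia a ⟨q, hq0, hq1⟩ φ, rfl⟩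

end LMP

open LMP in
theorem relT_sigmaLogic_eq_rel_sigmaLogic_general
    {S L : Type*} [MeasurableSpace S] (M : LMP S L) :
    M.relT M.sigmaLogic = rel M.sigmaLogic := by
  rw [sigmaLogic, rel_sigmaGen, relT_sigmaGen_of_isPiSystem M
    (by rintro _ ⟨φ, rfl⟩; exact M.measurableSet_sem φ) M.isPiSystem_range_sem ⟨LForm.top, rfl⟩]
  exact M.relT_range_sem_subset_rel.antisymm M.rel_range_sem_subset_relT

open LMP in
/-- For any LMP, `R^T(σ(⟦𝓛⟧)) = R(σ(⟦𝓛⟧))`: two states assign the same `τ_a`-probability to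
every set of σ(⟦𝓛⟧) for every label iff they belong to exactly the same sets of σ(⟦𝓛⟧). -/
theorem relT_sigmaLogic_eq_rel_sigmaLogic
    {S L : Type*} [MeasurableSpace S] [Countable L] (M : LMP S L) :
    M.relT M.sigmaLogic = rel M.sigmaLogic :=
  relT_sigmaLogic_eq_rel_sigmaLogic_general M
end

section
/- Let (S, Σ, {τ_a : a ∈ L}) be an LMP. For every sub-σ-algebra Λ ⊆ Σ, G(Λ) = Σ(R(G(Λ))): the σ-algebra G(Λ) consists exactly of the measurable sets that are closed under the relation R(G(Λ)). -/
open MeasureTheory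

/-! A symmetric relation `R` is recovered, as far as closed sets go, from its own closed sets:
`R` relates only states that no `R`-closed set separates, so `R ⊆ R(Σ(R))`, whence
`Σ(R(Σ(R))) ⊆ Σ(R)`; the other inclusion holds for any family of measurable sets. -/

namespace LMP

variable {S L : Type*}

theorem rclosed_rel_of_mem {F : Set (Set S)} {A : Set S} (hA : A ∈ F) : RClosed (rel F) A :=
  fun _ hx _ hxs => (hxs A hA).mp hx

variable [MeasurableSpace S]

theorem subset_sigmaCl_rel {F : Set (Set S)} (hF : ∀ A ∈ F, MeasurableSet A) :
    F ⊆ sigmaCl (rel F) :=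
  fun A hA => ⟨hF A hA, rclosed_rel_of_mem hA⟩

theorem sigmaCl_anti {R R' : Set (S × S)} (h : R ⊆ R') : sigmaCl R' ⊆ sigmaCl R :=
  fun _ hA => ⟨hA.1, fun _ hx _ hxs => hA.2 hx (h hxs)⟩

theorem subset_rel_sigmaCl (R : SetRel S S) [R.IsSymm] : R ⊆ rel (sigmaCl R) :=
  fun _ hxs _ hA => ⟨fun hx => hA.2 hx hxs, fun hs => hA.2 hs (R.symm hxs)⟩

theorem sigmaCl_rel_sigmaCl (R : SetRel S S) [R.IsSymm] :
    sigmaCl (rel (sigmaCl R)) = sigmaCl R :=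
  (sigmaCl_anti (subset_rel_sigmaCl R)).antisymm (subset_sigmaCl_rel fun _ hA => hA.1)

instance (M : LMP S L) (Λ : Set (Set S)) : SetRel.IsSymm (M.relT Λ) where
  symm _ _ h a E hE := (h a E hE).symm

end LMP

open LMP in
theorem Gop_eq_sigmaCl_rel_Gop_general
    {S L : Type*} [MeasurableSpace S]
    (M : LMP S L) (Λ : Set (Set S)) :
    M.Gop Λ = sigmaCl (rel (M.Gop Λ)) :=
  (sigmaCl_rel_sigmaCl (M.relT Λ)).symm

open LMP in
/-- For every sub-σ-algebra `Λ ⊆ Σ`, `𝒢(Λ) = Σ(R(𝒢(Λ)))`: the σ-algebra `𝒢(Λ)` consists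
exactly of the measurable sets closed under the relation `R(𝒢(Λ))`. -/
theorem Gop_eq_sigmaCl_rel_Gop
    {S L : Type*} [MeasurableSpace S] [Countable L]
    (M : LMP S L) (Λ : Set (Set S)) (hΛ : IsSubSigmaAlgebra Λ) :
    M.Gop Λ = sigmaCl (rel (M.Gop Λ)) :=
  Gop_eq_sigmaCl_rel_Gop_general M Λ
end

section
/- Let (S, Σ, {τ_a : a ∈ L}) be an LMP and R an equivalence relation on S such that ∼s ⊆ R and O(R) ⊆ R. Then there exists an ordinal α with |α| ≤ |S| such that O^α(R) = ∼s. -/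
open MeasureTheory

/-!
`𝒪` is monotone, so from a pre-fixed point `R` its iterates are Mathlib's approximants
`gfpApprox` of the greatest fixed point below `R`, a decreasing ordinal-indexed chain. A chain of
subsets of `S × S` that decreases strictly at every step stops before `|S × S|⁺ = |S|⁺` when `S`
is infinite; for finite `S` one counts equivalence classes instead. The stable value is a fixed
point of `𝒪`, hence a state bisimulation, while `∼s` is itself a fixed point below `R`, hence
below every approximant.
-/

open Cardinal OrdinalApprox

theorem Setoid.card_quotient_lt_of_lt {α : Type*} [Finite α] {r s : Setoid α} (h : r < s) :
    Nat.card (Quotient s) < Nat.card (Quotient r) := by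
  let f : Quotient r → Quotient s := Quotient.map' id fun _ _ hxy => h.le hxy
  have hf : Function.Surjective f := Quotient.ind fun x => ⟨⟦x⟧, rfl⟩
  have hf_not_inj : ¬Function.Injective f := by
    obtain ⟨x, y, hs, hr⟩ : ∃ x y, s x y ∧ ¬r x y := by
      simpa [Setoid.le_def] using h.not_ge
    exact fun hinj => hr (Quotient.exact (hinj (Quotient.sound hs : f ⟦x⟧ = f ⟦y⟧)))
  refine (Nat.card_le_card_of_surjective f hf).lt_of_ne fun hcard => hf_not_inj ?_
  exact ((Nat.bijective_iff_surjective_and_card f).2 ⟨hf, hcard.symm⟩).1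

theorem Setoid.exists_le_card_succ_eq_of_antitone {α : Type*} [Finite α] {r : ℕ → Setoid α}
    (hr : Antitone r) : ∃ k ≤ Nat.card α, r (k + 1) = r k := by
  by_contra! h
  have hgrow : ∀ k ≤ Nat.card α + 1, k ≤ Nat.card (Quotient (r k)) := by
    intro k
    induction k with
    | zero => exact fun _ => Nat.zero_le _
    | succ k ih =>
      intro hk
      have hstep := card_quotient_lt_of_lt ((hr (Nat.le_add_right k 1)).lt_of_ne (h k (by omega)))
      have hk' := ih (by omega)
      omega
  have hbound := Nat.card_le_card_of_surjective _ (Quotient.mk_surjective (s := r (Nat.card α + 1)))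
  have hlast := hgrow _ le_rfl
  omega

theorem Antitone.exists_card_le_add_one_eq {X : Type u} {f : Ordinal.{u} → Set X}
    (hf : Antitone f) : ∃ a : Ordinal.{u}, a.card ≤ #X ∧ f (a + 1) = f a := by
  by_contra! h
  have hssub : ∀ a : Set.Iio (Order.succ #X).ord, f (a + 1) ⊂ f a := fun a =>
    (hf (Order.le_succ _)).ssubset_of_ne (h a (Order.lt_succ_iff.1 (lt_ord.1 a.2)))
  choose g hg using fun a => Set.exists_of_ssubset (hssub a)
  have hg_inj : Function.Injective g := by
    refine Function.Injective.of_lt_imp_ne fun a b hab hgab => (hg a).2 ?_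
    exact hgab ▸ hf (Order.add_one_le_of_lt hab) (hg b).1
  have hcard := lift_mk_le_lift_mk_of_injective hg_inj
  rw [mk_Iio_ordinal, card_ord, lift_lift, lift_le] at hcard
  exact (Order.lt_succ #X).not_ge hcard

namespace LMP

section

variable {S L : Type*} [MeasurableSpace S] (M : LMP S L)

theorem sigmaCl_anti_s14 : Antitone (sigmaCl : Set (S × S) → Set (Set S)) :=
  fun _ _ h _ ⟨hm, hc⟩ => ⟨hm, fun _ hx _ hs => hc hx (h hs)⟩

theorem Oop_mono : Monotone M.Oop :=
  fun _ _ h _ hp a E hE => hp a E (sigmaCl_anti_s14 h hE)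

def OopHom : Set (S × S) →o Set (S × S) :=
  ⟨M.Oop, M.Oop_mono⟩

theorem equivalence_Oop (Q : Set (S × S)) : Equivalence fun s t : S => (s, t) ∈ M.Oop Q where
  refl _ _ _ _ := rfl
  symm h a E hE := (h a E hE).symm
  trans h₁ h₂ a E hE := (h₁ a E hE).trans (h₂ a E hE)

theorem isStateBisim_Oop_of_subset {Q : Set (S × S)} (h : Q ⊆ M.Oop Q) :
    M.IsStateBisim (M.Oop Q) :=
  ⟨fun _ hp => (M.equivalence_Oop Q).symm hp, fun _ hp a C hC => hp a C (sigmaCl_anti_s14 h hC)⟩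

theorem subset_stateBisim {Q : Set (S × S)} (h : M.IsStateBisim Q) : Q ⊆ M.stateBisim :=
  fun _ hp => ⟨Q, h, hp⟩

theorem stateBisim_subset_Oop : M.stateBisim ⊆ M.Oop M.stateBisim :=
  fun _ ⟨_, hQ, hp⟩ a _ hE => hQ.2 _ hp a _ (sigmaCl_anti_s14 (M.subset_stateBisim hQ) hE)

theorem Oop_stateBisim : M.Oop M.stateBisim = M.stateBisim :=
  (M.subset_stateBisim (M.isStateBisim_Oop_of_subset M.stateBisim_subset_Oop)).antisymm
    M.stateBisim_subset_Oop

theorem isStateBisim_of_Oop_eq {Q : Set (S × S)} (h : M.Oop Q = Q) : M.IsStateBisim Q :=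
  h ▸ M.isStateBisim_Oop_of_subset h.symm.subset

end

section

variable {S L : Type u} [MeasurableSpace S] (M : LMP S L) {R : Set (S × S)}

theorem Oiter_eq_gfpApprox (hpre : M.Oop R ⊆ R) (a : Ordinal.{u}) :
    M.Oiter R a = gfpApprox M.OopHom R a := by
  induction a using Ordinal.limitRecOn with
  | zero => rw [Oiter, Ordinal.limitRecOn_zero, gfpApprox_zero]
  | add_one a ih =>
    rw [Oiter, Ordinal.limitRecOn_add_one, gfpApprox_add_one _ hpre, ← ih]
    rfl
  | limit a ha ih =>
    rw [Oiter, Ordinal.limitRecOn_limit _ _ _ _ ha, gfpApprox_of_isSuccLimit _ ha]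
    simp only [iInf_subtype, Set.mem_Iio]
    exact Set.iInter₂_congr ih

theorem equivalence_gfpApprox_natCast (hequiv : Equivalence fun s t : S => (s, t) ∈ R)
    (hpre : M.Oop R ⊆ R) (k : ℕ) :
    Equivalence fun s t : S => (s, t) ∈ gfpApprox M.OopHom R k := by
  cases k with
  | zero => rwa [Nat.cast_zero, gfpApprox_zero]
  | succ k =>
    rw [Nat.cast_succ, gfpApprox_add_one _ hpre]
    exact M.equivalence_Oop _

theorem exists_card_le_gfpApprox_add_one_eq (hequiv : Equivalence fun s t : S => (s, t) ∈ R)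
    (hpre : M.Oop R ⊆ R) :
    ∃ α : Ordinal.{u}, α.card ≤ #S ∧ gfpApprox M.OopHom R (α + 1) = gfpApprox M.OopHom R α := by
  have hanti := gfpApprox_anti_right (x := R) M.OopHom
  cases finite_or_infinite S with
  | inr _ =>
    simpa [mk_prod, mul_eq_self (aleph0_le_mk S)] using hanti.exists_card_le_add_one_eq
  | inl _ =>
    -- the pairs of states alone would only give the bound `|S|²`
    let r (k : ℕ) : Setoid S := ⟨_, M.equivalence_gfpApprox_natCast hequiv hpre k⟩
    have hr : Antitone r := fun k l hkl _ _ h => hanti (Nat.cast_le.2 hkl) h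
    obtain ⟨k, hk, hrk⟩ := Setoid.exists_le_card_succ_eq_of_antitone hr
    refine ⟨k, by rw [Ordinal.card_nat, ← Nat.cast_card]; exact_mod_cast hk, ?_⟩
    ext p
    rw [← Nat.cast_succ]
    exact Setoid.ext_iff.1 hrk p.1 p.2

end

end LMP

open LMP in
theorem exists_Oiter_eq_stateBisim_general
    {S L : Type u} [MeasurableSpace S]
    (M : LMP S L) (R : Set (S × S))
    (hequiv : Equivalence fun s t : S => (s, t) ∈ R)
    (hsub : M.stateBisim ⊆ R) (hpre : M.Oop R ⊆ R) :
    ∃ α : Ordinal.{u}, α.card ≤ Cardinal.mk S ∧ M.Oiter R α = M.stateBisim := by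
  obtain ⟨α, hcard, hstable⟩ := M.exists_card_le_gfpApprox_add_one_eq hequiv hpre
  have hfixed : M.Oop (gfpApprox M.OopHom R α) = gfpApprox M.OopHom R α :=
    (gfpApprox_add_one _ hpre α).symm.trans hstable
  refine ⟨α, hcard, ?_⟩
  rw [M.Oiter_eq_gfpApprox hpre]
  exact (M.subset_stateBisim (M.isStateBisim_of_Oop_eq hfixed)).antisymm
    (le_gfpApprox_of_mem_fixedPoints M.OopHom M.Oop_stateBisim hsub α)

open LMP in
/-- If `R` is an equivalence relation with `∼s ⊆ R` and `𝒪(R) ⊆ R`, then iterating `𝒪` from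
`R` reaches state bisimilarity at some ordinal `α` with `|α| ≤ |S|`. -/
theorem exists_Oiter_eq_stateBisim
    {S L : Type u} [MeasurableSpace S] [Countable L]
    (M : LMP S L) (R : Set (S × S))
    (hequiv : Equivalence fun s t : S => (s, t) ∈ R)
    (hsub : M.stateBisim ⊆ R) (hpre : M.Oop R ⊆ R) :
    ∃ α : Ordinal.{u}, α.card ≤ Cardinal.mk S ∧ M.Oiter R α = M.stateBisim :=
  exists_Oiter_eq_stateBisim_general M R hequiv hsub hpre
end
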